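/- Let μ be an atomless probability measure on ℝ^d such that d̄(0) = 1/2 (i.e. every closed halfspace whose boundary passes through the origin has μ-measure 1/2). Let u_1, …, u_k ∈ S^{d−1} be arbitrary directions and let x ∈ ℝ^d be such that D̄_k(x) < 1/2. Then for every a ≥ 1, D̄_k(a·x) ≤ D̄_k(x). -/

import Mathlib

open MeasureTheory ProbabilityTheory Real
open scoped RealInnerProductSpace ENNReal NNReal

noncomputable section

abbrev Euc (d : ℕ) := EuclideanSpace ℝ (Fin d)

/-- The closed halfspace `{ y : ⟨y,u⟩ ≤ ⟨x,u⟩ }`. -/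
def halfspace {d : ℕ} (x u : Euc d) : Set (Euc d) := {y | ⟪y, u⟫ ≤ ⟪x, u⟫}

/-- Directional (population) depth `r̄(x,u) = μ(H(x,u))`. -/
def dirDepth {d : ℕ} (μ : Measure (Euc d)) (x u : Euc d) : ℝ := (μ (halfspace x u)).toReal

/-- Tukey depth `d̄(x)`. -/
def tukeyDepth {d : ℕ} (μ : Measure (Euc d)) (x : Euc d) : ℝ :=
  ⨅ u : Metric.sphere (0 : Euc d) 1, dirDepth μ x u

/-- Random Tukey depth `D̄_k(x)` for given directions. -/
def randTukeyDepth {d k : ℕ} (μ : Measure (Euc d)) (u : Fin k → Euc d) (x : Euc d) : ℝ :=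
  ⨅ i, dirDepth μ x (u i)

/-- Empirical directional depth `r_n(x,u)`. -/
def empDirDepth {d n : ℕ} (xs : Fin n → Euc d) (x u : Euc d) : ℝ :=
  (∑ i, (halfspace x u).indicator (1 : Euc d → ℝ) (xs i)) / n

/-- Empirical Tukey depth `d_n(x)`. -/
def empTukeyDepth {d n : ℕ} (xs : Fin n → Euc d) (x : Euc d) : ℝ :=
  ⨅ u : Metric.sphere (0 : Euc d) 1, empDirDepth xs x u

/-- Empirical random Tukey depth `D_{n,k}(x)`. -/
def empRandTukeyDepth {d n k : ℕ} (xs : Fin n → Euc d) (us : Fin k → Euc d) (x : Euc d) : ℝ :=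
  ⨅ i, empDirDepth xs x (us i)

/-- `μ` is log-concave: it has density `e^{-g}` w.r.t. Lebesgue, `g` convex. -/
def IsLogConcaveMeasure {d : ℕ} (μ : Measure (Euc d)) : Prop :=
  ∃ g : Euc d → ℝ, ConvexOn ℝ Set.univ g ∧
    μ = volume.withDensity fun y => ENNReal.ofReal (Real.exp (-g y))

/-- `μ` is isotropic: the covariance matrix is the identity. -/
def IsIsotropic {d : ℕ} (μ : Measure (Euc d)) : Prop :=
  ∀ u v : Euc d,
    (∫ y, ⟪y - ∫ z, z ∂μ, u⟫ * ⟪y - ∫ z, z ∂μ, v⟫ ∂μ) = ⟪u, v⟫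

/-- The uniform (rotation invariant) probability measure on the unit sphere, as the
normalized `(d-1)`-dimensional Hausdorff measure restricted to the sphere. -/
def sphereUniform (d : ℕ) : Measure (Euc d) :=
  (MeasureTheory.Measure.hausdorffMeasure ((d : ℝ) - 1)
      (Metric.sphere (0 : Euc d) 1))⁻¹ •
    (MeasureTheory.Measure.hausdorffMeasure ((d : ℝ) - 1)).restrict
      (Metric.sphere (0 : Euc d) 1)

/-!
Let `u_i` be a direction realising the minimum `D̄_k(x)`. Since `μ(H(x,u_i)) < 1/2 = μ(H(0,u_i))`,
the halfspace `H(x,u_i)` cannot contain `H(0,u_i)`, so `⟪x,u_i⟫ < 0`. Then `⟪a • x,u_i⟫ ≤ ⟪x,u_i⟫`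
for `a ≥ 1`, hence `D̄_k(a • x) ≤ μ(H(a • x,u_i)) ≤ μ(H(x,u_i)) = D̄_k(x)`.
-/

section DirDepth

variable {d : ℕ}

theorem halfspace_subset_halfspace {x y u : Euc d} (h : ⟪x, u⟫ ≤ ⟪y, u⟫) :
    halfspace x u ⊆ halfspace y u :=
  fun _ hz => le_trans hz h

variable {μ : Measure (Euc d)} [IsFiniteMeasure μ]

theorem dirDepth_mono {x y u : Euc d} (h : ⟪x, u⟫ ≤ ⟪y, u⟫) :
    dirDepth μ x u ≤ dirDepth μ y u :=
  ENNReal.toReal_mono (measure_ne_top μ _) (measure_mono (halfspace_subset_halfspace h))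

theorem inner_neg_of_dirDepth_lt_dirDepth_zero {x u : Euc d}
    (h : dirDepth μ x u < dirDepth μ 0 u) : ⟪x, u⟫ < 0 := by
  by_contra! hx
  exact (dirDepth_mono (by rwa [inner_zero_left])).not_gt h

theorem dirDepth_smul_le {x u : Euc d} (hx : ⟪x, u⟫ ≤ 0) {a : ℝ} (ha : 1 ≤ a) :
    dirDepth μ (a • x) u ≤ dirDepth μ x u :=
  dirDepth_mono (by rw [real_inner_smul_left]; nlinarith)

end DirDepth

theorem random_depth_monotone_along_rays_general
    (d k : ℕ) (μ : Measure (Euc d))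
    (hprob : IsProbabilityMeasure μ)
    (hdepth : ∀ u : Euc d, ‖u‖ = 1 → dirDepth μ 0 u = 1 / 2)
    (u : Fin k → Euc d) (hu : ∀ i, ‖u i‖ = 1)
    (x : Euc d) (hx : randTukeyDepth μ u x < 1 / 2) :
    ∀ a : ℝ, 1 ≤ a → randTukeyDepth μ u (a • x) ≤ randTukeyDepth μ u x := by
  intro a ha
  cases isEmpty_or_nonempty (Fin k)
  · simp [randTukeyDepth]
  obtain ⟨i, hi⟩ := exists_eq_ciInf_of_finite (f := fun i => dirDepth μ x (u i))
  have hneg : ⟪x, u i⟫ < 0 :=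
    inner_neg_of_dirDepth_lt_dirDepth_zero (by rw [hdepth _ (hu i), hi]; exact hx)
  calc randTukeyDepth μ u (a • x) ≤ dirDepth μ (a • x) (u i) :=
        ciInf_le (Finite.bddBelow_range _) i
    _ ≤ dirDepth μ x (u i) := dirDepth_smul_le hneg.le ha
    _ = randTukeyDepth μ u x := hi

/-- monotonicity along rays: if `μ` is an atomless probability measure
with `d̄(0) = 1/2` (every closed halfspace through the origin has measure `1/2`), then for
directions `u₁,…,u_k` and `x` with `D̄_k(x) < 1/2`, for all `a ≥ 1`,
`D̄_k(a·x) ≤ D̄_k(x)`. -/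
theorem random_depth_monotone_along_rays
    (d k : ℕ) (μ : Measure (Euc d)) [NullSingletonClass μ]
    (hprob : IsProbabilityMeasure μ)
    (hdepth : ∀ u : Euc d, ‖u‖ = 1 → dirDepth μ 0 u = 1 / 2)
    (u : Fin k → Euc d) (hu : ∀ i, ‖u i‖ = 1)
    (x : Euc d) (hx : randTukeyDepth μ u x < 1 / 2) :
    ∀ a : ℝ, 1 ≤ a → randTukeyDepth μ u (a • x) ≤ randTukeyDepth μ u x :=
  random_depth_monotone_along_rays_general d k μ hprob hdepth u hu x hx

end
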